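/- arXiv:2407.02179 — 5 statements merged into one kernel-verified Lean document; each statement's English description precedes it below -/
import Mathlib

section
/- If f is a distance-two coloring of a graph G with colors {1,...,q} and h is a graceful coloring of the complete graph K_q on vertex set {1,...,q}, then the composition h ∘ f is a graceful coloring of G. -/
open SimpleGraph

/-- A graceful coloring: proper, and differences at each vertex pairwise distinct. -/
def IsGraceful {V : Type*} (G : SimpleGraph V) (f : V → ℕ) : Prop :=
  (∀ ⦃u v⦄, G.Adj u v → f u ≠ f v) ∧
  ∀ ⦃v u w⦄, G.Adj v u → G.Adj v w → u ≠ w →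
    ((f v : ℤ) - f u).natAbs ≠ ((f v : ℤ) - f w).natAbs

/-- A graceful `k`-coloring: graceful with colors in `{1,…,k}`. -/
def IsGracefulK {V : Type*} (G : SimpleGraph V) (k : ℕ) (f : V → ℕ) : Prop :=
  IsGraceful G f ∧ ∀ v, f v ∈ Finset.Icc 1 k

/-- The graceful chromatic number. -/
noncomputable def gracefulChromatic {V : Type*} (G : SimpleGraph V) : ℕ :=
  sInf {k | ∃ f : V → ℕ, IsGracefulK G k f}

/-- The square of a graph: vertices adjacent iff at distance at most 2. -/
def squareGraph {V : Type*} (G : SimpleGraph V) : SimpleGraph V where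
  Adj u v := u ≠ v ∧ (G.Adj u v ∨ ∃ w, G.Adj u w ∧ G.Adj w v)
  symm := by
    constructor
    rintro u v ⟨hne, h | ⟨w, h1, h2⟩⟩
    · exact ⟨hne.symm, Or.inl h.symm⟩
    · exact ⟨hne.symm, Or.inr ⟨w, h2.symm, h1.symm⟩⟩
  loopless := by constructor; rintro u ⟨hne, -⟩; exact hne rfl

/-- A set of naturals is AP-free: no three distinct elements `i, j, l` with `|i-j| = |j-l|`. -/
def APFree (S : Finset ℕ) : Prop :=
  ∀ i ∈ S, ∀ j ∈ S, ∀ l ∈ S, i ≠ j → j ≠ l → i ≠ l →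
    ((i : ℤ) - j).natAbs ≠ ((j : ℤ) - l).natAbs

/-- OEIS A065825: least `k` such that `{1,…,k}` contains an AP-free `n`-element subset. -/
noncomputable def A (n : ℕ) : ℕ :=
  sInf {k | ∃ S ⊆ Finset.Icc 1 k, S.card = n ∧ APFree S}

/-- The complete graph on vertex set `{1,…,q} ⊆ ℕ` (other naturals isolated). -/
def Kq (q : ℕ) : SimpleGraph ℕ where
  Adj a b := a ≠ b ∧ a ∈ Finset.Icc 1 q ∧ b ∈ Finset.Icc 1 q
  symm := by constructor; rintro a b ⟨h, h1, h2⟩; exact ⟨h.symm, h2, h1⟩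
  loopless := by constructor; rintro a ⟨h, -⟩; exact h rfl

theorem IsGraceful.comp_hom {V W : Type*} {G : SimpleGraph V} {H : SimpleGraph W} {h : W → ℕ}
    (hh : IsGraceful H h) (φ : G →g H) (hφ : ∀ v, Set.InjOn φ (G.neighborSet v)) :
    IsGraceful G (h ∘ φ) :=
  ⟨fun _ _ huv => hh.1 (φ.map_adj huv),
    fun v _ _ hvu hvw huw =>
      hh.2 (φ.map_adj hvu) (φ.map_adj hvw) fun hφuw => huw (hφ v hvu hvw hφuw)⟩

def Kq.homOfColoring {V : Type*} (G : SimpleGraph V) (q : ℕ) (f : V → ℕ)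
    (hrange : ∀ v, f v ∈ Finset.Icc 1 q) (hproper : ∀ ⦃u v⦄, G.Adj u v → f u ≠ f v) :
    G →g Kq q where
  toFun := f
  map_rel' huv := ⟨hproper huv, hrange _, hrange _⟩

theorem stmt3 {V : Type*} (G : SimpleGraph V) (q : ℕ) (f : V → ℕ)
    (hrange : ∀ v, f v ∈ Finset.Icc 1 q)
    (hd2 : ∀ u v : V, u ≠ v → (G.Adj u v ∨ ∃ w, G.Adj u w ∧ G.Adj w v) → f u ≠ f v)
    (h : ℕ → ℕ) (hh : IsGraceful (Kq q) h) :
    IsGraceful G (h ∘ f) :=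
  hh.comp_hom (Kq.homOfColoring G q f hrange fun u v huv => hd2 u v huv.ne (.inl huv))
    fun v _ hu _ hw huw => by_contra fun hne => hd2 _ _ hne (.inr ⟨v, hu.symm, hw⟩) huw
end

section
/- For every positive integer n, the graceful chromatic number of the complete graph K_n equals a(n), the least integer k such that {1,...,k} contains an n-element subset with no three distinct elements in arithmetic progression. -/
open SimpleGraph

/-! In a complete graph every two vertices are adjacent, so a graceful colouring is exactly an
injective colouring whose colour set contains no three-term progression: the middle term of a
progression `i, j, l` is the colour of the vertex at which the two equal differences meet. -/

namespace SimpleGraph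

variable {V : Type*}

theorem isGraceful_top_iff [Fintype V] [DecidableEq V] {f : V → ℕ} :
    IsGraceful (⊤ : SimpleGraph V) f ↔ Function.Injective f ∧ APFree (Finset.univ.image f) := by
  simp only [APFree, Finset.mem_image, Finset.mem_univ, true_and, forall_exists_index,
    forall_apply_eq_imp_iff]
  constructor
  · rintro ⟨hproper, hdiff⟩
    have hinj : Function.Injective f := fun u v h => by_contra fun hne => hproper hne h
    refine ⟨hinj, fun u v w huv hvw huw => ?_⟩
    have := hdiff (v := v) (u := u) (w := w) (hinj.ne_iff.mp huv).symm (hinj.ne_iff.mp hvw)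
      (hinj.ne_iff.mp huw)
    omega
  · rintro ⟨hinj, hAP⟩
    refine ⟨fun u v huv => hinj.ne huv, fun v u w hvu hvw huw => ?_⟩
    have := hAP u v w (hinj.ne hvu.symm) (hinj.ne hvw) (hinj.ne huw)
    omega

theorem exists_isGracefulK_top_iff [Fintype V] (k : ℕ) :
    (∃ f, IsGracefulK (⊤ : SimpleGraph V) k f) ↔
      ∃ S ⊆ Finset.Icc 1 k, S.card = Fintype.card V ∧ APFree S := by
  classical
  constructor
  · rintro ⟨f, hgraceful, hrange⟩
    obtain ⟨hinj, hAP⟩ := isGraceful_top_iff.mp hgraceful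
    refine ⟨Finset.univ.image f, ?_, Finset.card_image_of_injective _ hinj, hAP⟩
    simpa [Finset.subset_iff] using hrange
  · rintro ⟨S, hS, hcard, hAP⟩
    let e : V ≃ S := Fintype.equivOfCardEq (by rw [Fintype.card_coe, hcard])
    have hinj : Function.Injective fun v => (e v : ℕ) := Subtype.val_injective.comp e.injective
    have himage : Finset.univ.image (fun v => (e v : ℕ)) = S := by
      ext x
      refine ⟨fun hx => ?_, fun hx => Finset.mem_image.mpr ⟨e.symm ⟨x, hx⟩, by simp⟩⟩
      obtain ⟨v, -, rfl⟩ := Finset.mem_image.mp hx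
      exact (e v).2
    exact ⟨_, isGraceful_top_iff.mpr ⟨hinj, himage.symm ▸ hAP⟩, fun v => hS (e v).2⟩

end SimpleGraph

theorem stmt6_general (n : ℕ) :
    gracefulChromatic (⊤ : SimpleGraph (Fin n)) = A n := by
  unfold gracefulChromatic A
  congr 1
  ext k
  simpa using exists_isGracefulK_top_iff (V := Fin n) k

theorem stmt6 (n : ℕ) (hn : 1 ≤ n) :
    gracefulChromatic (⊤ : SimpleGraph (Fin n)) = A n :=
  stmt6_general n
end

section
/- If f is a graceful 5-coloring of a graph G and v is a vertex of degree at least 3, then f(v) ∈ {1, 2, 4, 5}. -/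
open SimpleGraph

namespace IsGracefulK

variable {V : Type*} {G : SimpleGraph V} {k : ℕ} {f : V → ℕ}

/-- The neighbours of `v` realise pairwise distinct distances `|f v - f u|`, all in
`[1, max (f v - 1) (k - f v)]`. -/
theorem degree_le_max (hf : IsGracefulK G k f) (v : V) [Fintype (G.neighborSet v)] :
    G.degree v ≤ max (f v - 1) (k - f v) := by
  obtain ⟨⟨hproper, hdistinct⟩, hrange⟩ := hf
  have hmaps : ∀ u ∈ G.neighborFinset v,
      ((f v : ℤ) - f u).natAbs ∈ Finset.Icc 1 (max (f v - 1) (k - f v)) := by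
    intro u hu
    have hne := hproper ((G.mem_neighborFinset v u).mp hu)
    have hu_range := Finset.mem_Icc.mp (hrange u)
    have hv_range := Finset.mem_Icc.mp (hrange v)
    rw [Finset.mem_Icc]
    omega
  have hinj : Set.InjOn (fun u => ((f v : ℤ) - f u).natAbs) (G.neighborFinset v) := by
    intro u hu w hw hdist
    by_contra huw
    exact hdistinct ((G.mem_neighborFinset v u).mp hu) ((G.mem_neighborFinset v w).mp hw) huw hdist
  simpa [G.card_neighborFinset_eq_degree] using Finset.card_le_card_of_injOn _ hmaps hinj

end IsGracefulK

theorem stmt12 {V : Type*} [Fintype V] (G : SimpleGraph V) [DecidableRel G.Adj]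
    (f : V → ℕ) (hf : IsGracefulK G 5 f) (v : V) (hv : 3 ≤ G.degree v) :
    f v ∈ ({1, 2, 4, 5} : Finset ℕ) := by
  have hdeg := hf.degree_le_max v
  have hv_range := Finset.mem_Icc.mp (hf.2 v)
  simp only [Finset.mem_insert, Finset.mem_singleton]
  omega
end

section
/- A 3-regular graph G is graceful 5-colorable if and only if G is distance-two 4-colorable, i.e., χ(G²) ≤ 4. -/
/-!
A graceful colouring is in particular a colouring of `G²`, since two neighbours of `v` with the
same colour would give equal differences at `v`. In a graceful `5`-colouring of a cubic graph no
vertex has colour `3`, so collapsing `1, 2, 4, 5` to `1, 2, 3, 4` gives a colouring of `G²`.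
Conversely `{1, 2, 4, 5}` contains no three-term arithmetic progression, and a colouring of `G²`
with an AP-free palette is graceful, because equal differences `|f v - f u| = |f v - f w|` with
`f u ≠ f w` make `f u, f v, f w` an arithmetic progression.
-/

open SimpleGraph

namespace IsGraceful

variable {V : Type*} {G : SimpleGraph V} {f : V → ℕ}

theorem ne_of_adj_of_adj (hf : IsGraceful G f) {v u w : V} (hu : G.Adj v u) (hw : G.Adj v w)
    (huw : u ≠ w) : f u ≠ f w := fun h ↦ hf.2 hu hw huw (by rw [h])

theorem squareGraph_adj (hf : IsGraceful G f) {u v : V} (huv : (squareGraph G).Adj u v) :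
    f u ≠ f v := by
  obtain ⟨hne, huv | ⟨w, hwu, hwv⟩⟩ := huv
  · exact hf.1 huv
  · exact hf.ne_of_adj_of_adj hwu.symm hwv hne

theorem injOn_neighborSet (hf : IsGraceful G f) (v : V) :
    Set.InjOn (fun u ↦ ((f v : ℤ) - f u).natAbs) (G.neighborSet v) := by
  intro u hu w hw h
  by_contra huw
  exact hf.2 hu hw huw h

end IsGraceful

/-- At a vertex coloured `3` the differences to the other colours in `{1,…,5}` lie in `{1, 2}`. -/
theorem IsGracefulK.mem_of_three_le_degree {V : Type*} {G : SimpleGraph V} {f : V → ℕ}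
    {v : V} [Fintype (G.neighborSet v)] (hf : IsGracefulK G 5 f) (hv : 3 ≤ G.degree v) :
    f v ∈ ({1, 2, 4, 5} : Finset ℕ) := by
  have hrange (u : V) : 1 ≤ f u ∧ f u ≤ 5 := Finset.mem_Icc.mp (hf.2 u)
  suffices f v ≠ 3 by have := hrange v; simp only [Finset.mem_insert, Finset.mem_singleton]; omega
  intro h3
  have hmaps : Set.MapsTo (fun u ↦ ((f v : ℤ) - f u).natAbs) (G.neighborFinset v)
      (Finset.Icc 1 2) := by
    intro u hu
    have := hrange u
    have := hf.1.1 ((G.mem_neighborFinset v u).mp hu)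
    simp only [Finset.coe_Icc, Set.mem_Icc]
    omega
  have := Finset.card_le_card_of_injOn _ hmaps (by simpa using hf.1.injOn_neighborSet v)
  simp only [card_neighborFinset_eq_degree, Nat.card_Icc] at this
  omega

theorem isGraceful_of_squareGraph_of_apFree {V : Type*} {G : SimpleGraph V} {f : V → ℕ}
    {S : Finset ℕ} (hS : APFree S) (hfS : ∀ v, f v ∈ S)
    (hf : ∀ u v, (squareGraph G).Adj u v → f u ≠ f v) : IsGraceful G f := by
  have hadj {u v : V} (h : G.Adj u v) : f u ≠ f v := hf u v ⟨G.ne_of_adj h, Or.inl h⟩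
  refine ⟨fun u v h ↦ hadj h, fun v u w hu hw huw h ↦ ?_⟩
  refine hS _ (hfS u) _ (hfS v) _ (hfS w) (hadj hu.symm) (hadj hw)
    (hf u w ⟨huw, Or.inr ⟨v, hu.symm, hw⟩⟩) ?_
  rw [← h, ← Int.natAbs_neg, neg_sub]

theorem apFree_one_two_four_five : APFree {1, 2, 4, 5} := by
  unfold APFree
  decide

theorem exists_squareGraph_coloring_comp {V : Type*} {G : SimpleGraph V} {f : V → ℕ}
    {S T : Finset ℕ} (g : ℕ → ℕ) (hg : ∀ a ∈ S, ∀ b ∈ S, g a = g b → a = b)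
    (hgST : ∀ a ∈ S, g a ∈ T) (hfS : ∀ v, f v ∈ S)
    (hf : ∀ u v, (squareGraph G).Adj u v → f u ≠ f v) :
    ∃ f' : V → ℕ, (∀ v, f' v ∈ T) ∧ ∀ u v, (squareGraph G).Adj u v → f' u ≠ f' v :=
  ⟨g ∘ f, fun v ↦ hgST _ (hfS v), fun u v huv h ↦ hf u v huv (hg _ (hfS u) _ (hfS v) h)⟩

theorem stmt14 {V : Type*} [Fintype V] (G : SimpleGraph V) [DecidableRel G.Adj]
    (hreg : G.IsRegularOfDegree 3) :
    (∃ f : V → ℕ, IsGracefulK G 5 f) ↔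
      ∃ f : V → ℕ, (∀ v, f v ∈ Finset.Icc 1 4) ∧
        ∀ u v : V, u ≠ v → (G.Adj u v ∨ ∃ w, G.Adj u w ∧ G.Adj w v) → f u ≠ f v := by
  constructor
  · rintro ⟨f, hf⟩
    have hfS (v : V) := hf.mem_of_three_le_degree (hreg v).ge
    obtain ⟨f', hf'T, hf'⟩ := exists_squareGraph_coloring_comp (T := Finset.Icc 1 4)
      (fun c ↦ if c ≤ 2 then c else c - 1) (by decide) (by decide) hfS
      (fun _ _ ↦ hf.1.squareGraph_adj)
    exact ⟨f', hf'T, fun u v huv h ↦ hf' u v ⟨huv, h⟩⟩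
  · rintro ⟨f, hf4, hf⟩
    obtain ⟨f', hf'S, hf'⟩ := exists_squareGraph_coloring_comp (T := {1, 2, 4, 5})
      (fun c ↦ if c ≤ 2 then c else c + 1) (by decide) (by decide) hf4
      (fun u v huv ↦ hf u v huv.1 huv.2)
    have hf'T (v : V) : f' v ∈ Finset.Icc 1 5 :=
      (by decide : {1, 2, 4, 5} ⊆ Finset.Icc 1 5) (hf'S v)
    exact ⟨f', isGraceful_of_squareGraph_of_apFree apFree_one_two_four_five hf'S hf', hf'T⟩
end

section
/- Let k ≥ 5. In any graceful k-coloring f of a graph G, every vertex of degree k-2 receives a color in {1, 2, k-1, k}. -/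
open SimpleGraph

theorem stmt17 {V : Type*} [Fintype V] (G : SimpleGraph V) [DecidableRel G.Adj]
    (k : ℕ) (hk : 5 ≤ k) (f : V → ℕ) (hf : IsGracefulK G k f)
    (v : V) (hv : G.degree v = k - 2) :
    f v ∈ ({1, 2, k - 1, k} : Finset ℕ) := by
  obtain ⟨⟨hprop, hgr⟩, hrange⟩ := hf
  by_contra hc
  simp only [Finset.mem_insert, Finset.mem_singleton, not_or] at hc
  obtain ⟨h1, h2, h3, h4⟩ := hc
  have hcv := hrange v
  rw [Finset.mem_Icc] at hcv
  set c := f v with hcdef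
  have hc3 : 3 ≤ c := by omega
  have hck : c ≤ k - 2 := by omega
  -- injective map from neighbors into Icc 1 (k-3)
  have hcard : (G.neighborFinset v).card ≤ (Finset.Icc 1 (k-3)).card := by
    apply Finset.card_le_card_of_injOn (fun u => ((c : ℤ) - f u).natAbs)
    · intro u hu
      rw [Finset.mem_coe, SimpleGraph.mem_neighborFinset] at hu
      have hfu := hrange u
      rw [Finset.mem_Icc] at hfu
      have hne : f u ≠ c := (hprop hu.symm)
      simp only [Finset.coe_Icc, Set.mem_Icc]
      constructor
      · omega
      · omega
    · intro u hu w hw heq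
      rw [Finset.mem_coe, SimpleGraph.mem_neighborFinset] at hu hw
      by_contra huw
      exact hgr hu hw huw heq
  rw [SimpleGraph.card_neighborFinset_eq_degree, hv, Nat.card_Icc] at hcard
  omega
end
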